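/- arXiv:2202.03196 — 2 statements merged into one kernel-verified Lean document; each statement's English description precedes it below -/
import Mathlib

section
/- Let ÷ be an AGM contraction operator with contraction-compatible faithful assignment Ψ ↦ ≤_Ψ. Then ÷ satisfies (IC2_⇒): if α ⊨ β then Ψ ÷ α ÷ β ⊨ γ implies Ψ ÷ β ⊨ γ, if and only if for all worlds ω₁, ω₂ ⊨ ¬α: ω₁ ≤_Ψ ω₂ implies ω₁ ≤_{Ψ÷α} ω₂. -/
inductive Form (V : Type) : Type
  | var : V → Form V
  | falsum : Form V
  | imp : Form V → Form V → Form V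

namespace Form

def eval {V : Type} (w : V → Bool) : Form V → Bool
  | var v => w v
  | falsum => false
  | imp a b => !(eval w a) || eval w b

def neg {V : Type} (a : Form V) : Form V := imp a falsum

def top {V : Type} : Form V := neg falsum

def conj {V : Type} (a b : Form V) : Form V := neg (imp a (neg b))

end Form

/-- Worlds (propositional interpretations) over the signature `V`. -/
abbrev World (V : Type) := V → Bool

/-- Models of a single formula. -/
def FMod {V : Type} (a : Form V) : Set (World V) := {w | a.eval w = true}

/-- Models of a set of formulas. -/
def SMod {V : Type} (X : Set (Form V)) : Set (World V) := {w | ∀ a ∈ X, a.eval w = true}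

/-- Deductive closure (consequence operator). -/
def Cn {V : Type} (X : Set (Form V)) : Set (Form V) := {b | ∀ w ∈ SMod X, b.eval w = true}

/-- Minimal elements of a set of worlds w.r.t. a relation. -/
def minSet {V : Type} (S : Set (World V)) (r : World V → World V → Prop) : Set (World V) :=
  {w ∈ S | ∀ w' ∈ S, r w w'}

/-- Total preorder: total (hence reflexive) and transitive. -/
def TotalPre {V : Type} (r : World V → World V → Prop) : Prop :=
  (∀ x y, r x y ∨ r y x) ∧ (∀ x y z, r x y → r y z → r x z)

/-- A belief change operator over epistemic states `E`: each state has a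
deductively closed belief set, and the operator maps a state and a formula to a state. -/
structure BCO (V E : Type) where
  Bel : E → Set (Form V)
  closed : ∀ Ψ, Cn (Bel Ψ) = Bel Ψ
  op : E → Form V → E

/-- Models of (the belief set of) an epistemic state. -/
def stMod {V E : Type} (O : BCO V E) (Ψ : E) : Set (World V) := SMod (O.Bel Ψ)

/-- Faithful assignment: each `le Ψ` is a total preorder; models of `Ψ` are mutually
equivalent and strictly below non-models. -/
def Faithful {V E : Type} (O : BCO V E) (le : E → World V → World V → Prop) : Prop :=
  (∀ Ψ, TotalPre (le Ψ)) ∧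
  (∀ Ψ w₁ w₂, w₁ ∈ stMod O Ψ → w₂ ∈ stMod O Ψ → le Ψ w₁ w₂) ∧
  (∀ Ψ w₁ w₂, w₁ ∈ stMod O Ψ → w₂ ∉ stMod O Ψ → (le Ψ w₁ w₂ ∧ ¬ le Ψ w₂ w₁))

/-- Contraction-compatibility: `[[Ψ ÷ α]] = [[Ψ]] ∪ min([[¬α]], ≤_Ψ)`. -/
def ContrCompat {V E : Type} (O : BCO V E) (le : E → World V → World V → Prop) : Prop :=
  ∀ Ψ (α : Form V), stMod O (O.op Ψ α) = stMod O Ψ ∪ minSet (FMod α.neg) (le Ψ)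

/-- Revision-compatibility: `[[Ψ * α]] = min([[α]], ≤_Ψ)`. -/
def RevCompat {V E : Type} (O : BCO V E) (le : E → World V → World V → Prop) : Prop :=
  ∀ Ψ (α : Form V), stMod O (O.op Ψ α) = minSet (FMod α) (le Ψ)

/-- The AGM contraction postulates (C1)–(C7) for epistemic states. -/
def AGMContr {V E : Type} (O : BCO V E) : Prop :=
  (∀ Ψ α, O.Bel (O.op Ψ α) ⊆ O.Bel Ψ) ∧
  (∀ Ψ α, α ∉ O.Bel Ψ → O.Bel Ψ ⊆ O.Bel (O.op Ψ α)) ∧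
  (∀ Ψ (α : Form V), ¬ (∀ w, w ∈ FMod α) → α ∉ O.Bel (O.op Ψ α)) ∧
  (∀ Ψ α, O.Bel Ψ ⊆ Cn (O.Bel (O.op Ψ α) ∪ {α})) ∧
  (∀ Ψ α β, FMod α = FMod β → O.Bel (O.op Ψ α) = O.Bel (O.op Ψ β)) ∧
  (∀ Ψ (α β : Form V), O.Bel (O.op Ψ α) ∩ O.Bel (O.op Ψ β) ⊆ O.Bel (O.op Ψ (α.conj β))) ∧
  (∀ Ψ (α β : Form V), β ∉ O.Bel (O.op Ψ (α.conj β)) → O.Bel (O.op Ψ (α.conj β)) ⊆ O.Bel (O.op Ψ β))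

/-- Unbiasedness: every consistent set of formulas has an epistemic state whose
belief set is its deductive closure. -/
def Unbiased {V E : Type} (O : BCO V E) : Prop :=
  ∀ L : Set (Form V), (SMod L).Nonempty → ∃ Ψ : E, O.Bel Ψ = Cn L

/-!
Contraction-compatibility describes `[[Ψ ÷ α ÷ β]]` and `[[Ψ ÷ β]]` through the minima of
`[[¬β]]` under `≤_{Ψ÷α}` and `≤_Ψ`. When `[[¬β]] ⊆ [[¬α]]`, preserving `≤_Ψ` on `[[¬α]]` keeps
every `≤_Ψ`-minimum of `[[¬β]]` minimal for `≤_{Ψ÷α}`, which is (IC2_⇒) on models. Conversely,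
over a finite signature every set of worlds is `[[β]]` for some `β`; taking `[[¬β]] = {ω₁, ω₂}`
makes `ω₁` a `≤_Ψ`-minimum of `[[¬β]]`, so by (IC2_⇒) it is a model of `Ψ ÷ α ÷ β`, and either
it is a model of `Ψ ÷ α` (and lies below everything by faithfulness) or it is `≤_{Ψ÷α}`-minimal
in `[[¬β]] ∋ ω₂`.
-/

section Definability

variable {V : Type}

theorem FMod_var (v : V) : FMod (Form.var v) = {w | w v = true} := rfl

theorem FMod_neg (a : Form V) : FMod a.neg = (FMod a)ᶜ := by
  ext w
  simp [FMod, Form.neg, Form.eval]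

theorem FMod_disj (a b : Form V) : FMod (a.neg.imp b) = FMod a ∪ FMod b := by
  ext w
  cases h : a.eval w <;> simp [FMod, Form.neg, Form.eval, h]

def IsDefinable (S : Set (World V)) : Prop := ∃ γ : Form V, FMod γ = S

theorem IsDefinable.compl {S : Set (World V)} (hS : IsDefinable S) : IsDefinable Sᶜ := by
  obtain ⟨γ, rfl⟩ := hS
  exact ⟨γ.neg, FMod_neg γ⟩

theorem IsDefinable.union {S T : Set (World V)} (hS : IsDefinable S) (hT : IsDefinable T) :
    IsDefinable (S ∪ T) := by
  obtain ⟨a, rfl⟩ := hS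
  obtain ⟨b, rfl⟩ := hT
  exact ⟨a.neg.imp b, FMod_disj a b⟩

theorem isDefinable_biUnion {ι : Type*} (s : Finset ι) {f : ι → Set (World V)}
    (hf : ∀ i ∈ s, IsDefinable (f i)) : IsDefinable (⋃ i ∈ s, f i) := by
  classical
  induction s using Finset.induction_on with
  | empty => exact ⟨Form.falsum, by ext w; simp [FMod, Form.eval]⟩
  | insert i s _ ih =>
    rw [Finset.set_biUnion_insert]
    exact (hf i (s.mem_insert_self i)).union (ih fun j hj => hf j (Finset.mem_insert_of_mem hj))

theorem isDefinable_setOf_apply_eq (v : V) (b : Bool) : IsDefinable {w : World V | w v = b} := by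
  cases b
  · refine ⟨(Form.var v).neg, ?_⟩
    ext w
    simp [FMod_neg, FMod_var]
  · exact ⟨Form.var v, FMod_var v⟩

theorem isDefinable_singleton [Finite V] (ω : World V) : IsDefinable {ω} := by
  have := Fintype.ofFinite V
  have hcompl : ({ω}ᶜ : Set (World V)) = ⋃ v ∈ (Finset.univ : Finset V), {w | w v = !ω v} := by
    ext w
    simp [funext_iff, Bool.eq_not_iff]
  rw [← compl_compl ({ω} : Set (World V)), hcompl]
  exact (isDefinable_biUnion Finset.univ fun v _ => isDefinable_setOf_apply_eq v (!ω v)).compl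

theorem isDefinable [Finite V] (S : Set (World V)) : IsDefinable S := by
  classical
  have := Fintype.ofFinite (World V)
  simpa using isDefinable_biUnion (Set.toFinset S) fun ω _ => isDefinable_singleton ω

end Definability

section Beliefs

variable {V E : Type} (O : BCO V E)

theorem mem_Bel_iff_stMod_subset {Ψ : E} {γ : Form V} : γ ∈ O.Bel Ψ ↔ stMod O Ψ ⊆ FMod γ := by
  refine ⟨fun h w hw => hw γ h, fun h => ?_⟩
  rw [← O.closed]
  exact fun w hw => h hw

theorem Bel_subset_Bel_iff [Finite V] {Ψ Φ : E} : O.Bel Ψ ⊆ O.Bel Φ ↔ stMod O Φ ⊆ stMod O Ψ := by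
  refine ⟨fun h => ?_, fun h γ hγ => ?_⟩
  · obtain ⟨γ, hγ⟩ := isDefinable (stMod O Ψ)
    rw [← hγ, ← mem_Bel_iff_stMod_subset]
    exact h ((mem_Bel_iff_stMod_subset O).2 hγ.ge)
  · rw [mem_Bel_iff_stMod_subset] at hγ ⊢
    exact h.trans hγ

end Beliefs

theorem minSet_subset_minSet {V : Type} {S T : Set (World V)} {r r' : World V → World V → Prop}
    (hST : S ⊆ T) (hr : ∀ w₁ ∈ T, ∀ w₂ ∈ T, r w₁ w₂ → r' w₁ w₂) : minSet S r ⊆ minSet S r' :=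
  fun w ⟨hw, hmin⟩ => ⟨hw, fun w' hw' => hr w (hST hw) w' (hST hw') (hmin w' hw')⟩

theorem mem_minSet_pair {V : Type} {r : World V → World V → Prop} (hr : TotalPre r)
    {ω₁ ω₂ : World V} (h : r ω₁ ω₂) : ω₁ ∈ minSet {ω₁, ω₂} r := by
  refine ⟨Or.inl rfl, ?_⟩
  rintro w (rfl | rfl)
  · exact (hr.1 w w).elim id id
  · exact h

section Contraction

variable {V E : Type} {O : BCO V E} {le : E → World V → World V → Prop}

theorem Faithful.le_of_mem_stMod (hF : Faithful O le) {Ψ : E} {w₁ : World V}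
    (h₁ : w₁ ∈ stMod O Ψ) (w₂ : World V) : le Ψ w₁ w₂ := by
  by_cases h₂ : w₂ ∈ stMod O Ψ
  · exact hF.2.1 Ψ w₁ w₂ h₁ h₂
  · exact (hF.2.2 Ψ w₁ w₂ h₁ h₂).1

theorem ContrCompat.stMod_op_subset_stMod_op_op (hC : ContrCompat O le) {Ψ : E} {α β : Form V}
    (hle : ∀ ω₁ ∈ FMod α.neg, ∀ ω₂ ∈ FMod α.neg, le Ψ ω₁ ω₂ → le (O.op Ψ α) ω₁ ω₂)
    (hαβ : FMod α ⊆ FMod β) : stMod O (O.op Ψ β) ⊆ stMod O (O.op (O.op Ψ α) β) := by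
  have hneg : FMod β.neg ⊆ FMod α.neg := by
    rw [FMod_neg, FMod_neg]
    exact Set.compl_subset_compl.2 hαβ
  rw [hC, hC, hC]
  exact Set.union_subset_union Set.subset_union_left
    (minSet_subset_minSet le_rfl fun w₁ h₁ w₂ h₂ => hle w₁ (hneg h₁) w₂ (hneg h₂))

theorem ContrCompat.le_op [Finite V] (hF : Faithful O le) (hC : ContrCompat O le) {Ψ : E}
    {α : Form V}
    (hIC : ∀ β : Form V, FMod α ⊆ FMod β → stMod O (O.op Ψ β) ⊆ stMod O (O.op (O.op Ψ α) β))
    {ω₁ ω₂ : World V} (h₁ : ω₁ ∈ FMod α.neg) (h₂ : ω₂ ∈ FMod α.neg) (h₁₂ : le Ψ ω₁ ω₂) :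
    le (O.op Ψ α) ω₁ ω₂ := by
  obtain ⟨β, hβ⟩ := (isDefinable ({ω₁, ω₂} : Set (World V))).compl
  have hnegβ : FMod β.neg = {ω₁, ω₂} := by rw [FMod_neg, hβ, compl_compl]
  have hαβ : FMod α ⊆ FMod β := by
    rw [← compl_compl (FMod α), ← FMod_neg, hβ, Set.compl_subset_compl]
    exact Set.insert_subset h₁ (Set.singleton_subset_iff.2 h₂)
  have hω₁ : ω₁ ∈ stMod O (O.op Ψ β) := by
    rw [hC, hnegβ]
    exact Or.inr (mem_minSet_pair (hF.1 Ψ) h₁₂)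
  have := hIC β hαβ hω₁
  rw [hC, hnegβ] at this
  rcases this with hmodel | hmin
  · exact hF.le_of_mem_stMod hmodel ω₂
  · exact hmin.2 ω₂ (Or.inr rfl)

end Contraction

theorem stmt_11_general {V E : Type} [Fintype V] (O : BCO V E)
    (le : E → World V → World V → Prop)
    (hF : Faithful O le) (hC : ContrCompat O le) :
    (∀ (Ψ : E) (α β γ : Form V), FMod α ⊆ FMod β →
        γ ∈ O.Bel (O.op (O.op Ψ α) β) → γ ∈ O.Bel (O.op Ψ β)) ↔
    (∀ (Ψ : E) (α : Form V) (ω₁ ω₂ : World V),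
        ω₁ ∈ FMod α.neg → ω₂ ∈ FMod α.neg → le Ψ ω₁ ω₂ → le (O.op Ψ α) ω₁ ω₂) := by
  constructor
  · intro hIC Ψ α ω₁ ω₂
    exact hC.le_op hF fun β hαβ => (Bel_subset_Bel_iff O).1 fun γ => hIC Ψ α β γ hαβ
  · intro hle Ψ α β γ hαβ
    exact fun hγ => (Bel_subset_Bel_iff O).2 (hC.stMod_op_subset_stMod_op_op
      (fun ω₁ h₁ ω₂ h₂ => hle Ψ α ω₁ ω₂ h₁ h₂) hαβ) hγ

/-- (IC2_⇒) holds iff for all models `ω₁, ω₂` of `¬α`,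
`ω₁ ≤_Ψ ω₂` implies `ω₁ ≤_{Ψ÷α} ω₂`. -/
theorem stmt_11 {V E : Type} [Fintype V] (O : BCO V E)
    (le : E → World V → World V → Prop)
    (hA : AGMContr O) (hF : Faithful O le) (hC : ContrCompat O le) :
    (∀ (Ψ : E) (α β γ : Form V), FMod α ⊆ FMod β →
        γ ∈ O.Bel (O.op (O.op Ψ α) β) → γ ∈ O.Bel (O.op Ψ β)) ↔
    (∀ (Ψ : E) (α : Form V) (ω₁ ω₂ : World V),
        ω₁ ∈ FMod α.neg → ω₂ ∈ FMod α.neg → le Ψ ω₁ ω₂ → le (O.op Ψ α) ω₁ ω₂) :=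
  stmt_11_general O le hF hC
end

section
/- Every trivial AGM contraction operator violates the independence postulate (IC_ind). A trivial contraction sets [[Ψ÷α]] = [[Ψ]] if [[Ψ]] ∩ [[¬α]] ≠ ∅ and [[Ψ÷α]] = [[Ψ]] ∪ [[¬α]] otherwise; (IC_ind) states: if ¬α ⊨ γ and Ψ ÷ β ⊭ (¬α → β), then Ψ ÷ α ⊨ γ implies Ψ ÷ α ÷ β ⊨ γ. Assume |Ω| ≥ 3 and the set of epistemic states is unbiased. -/
namespace Form

variable {V : Type}

@[simp]
lemma FMod_falsum : FMod (falsum : Form V) = ∅ := by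
  ext w
  simp [FMod, eval]

@[simp]
lemma FMod_var (v : V) : FMod (var v) = {w | w v = true} := rfl

@[simp]
lemma FMod_imp (a b : Form V) : FMod (imp a b) = (FMod a)ᶜ ∪ FMod b := by
  ext w
  cases ha : a.eval w <;> simp [FMod, eval, ha]

@[simp]
lemma FMod_neg (a : Form V) : FMod a.neg = (FMod a)ᶜ := by
  simp [neg]

lemma exists_FMod_eq_biUnion {ι : Type*} (S : ι → Set (World V))
    (hS : ∀ i, ∃ a : Form V, FMod a = S i) (s : Finset ι) :
    ∃ a : Form V, FMod a = ⋃ i ∈ s, S i := by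
  classical
  induction s using Finset.induction_on with
  | empty => exact ⟨falsum, by simp⟩
  | insert i s _ ih =>
    obtain ⟨a, ha⟩ := hS i
    obtain ⟨b, hb⟩ := ih
    exact ⟨imp a.neg b, by simp [ha, hb]⟩

lemma exists_FMod_eq_iUnion {ι : Type*} [Finite ι] (S : ι → Set (World V))
    (hS : ∀ i, ∃ a : Form V, FMod a = S i) : ∃ a : Form V, FMod a = ⋃ i, S i := by
  have := Fintype.ofFinite ι
  simpa using exists_FMod_eq_biUnion S hS Finset.univ

lemma exists_FMod_eq_singleton [Finite V] (w : World V) :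
    ∃ a : Form V, FMod a = {w} := by
  obtain ⟨a, ha⟩ : ∃ a : Form V, FMod a = ⋃ v, {u : World V | u v ≠ w v} := by
    refine exists_FMod_eq_iUnion _ fun v => ?_
    cases hw : w v
    · exact ⟨var v, by simp⟩
    · exact ⟨(var v).neg, by ext; simp⟩
  refine ⟨a.neg, ?_⟩
  rw [FMod_neg, ha, ← compl_compl ({w} : Set (World V))]
  congr 1
  ext u
  simp [funext_iff]

lemma exists_FMod_eq [Finite V] (S : Set (World V)) : ∃ a : Form V, FMod a = S := by
  obtain ⟨a, ha⟩ := exists_FMod_eq_iUnion (fun w : S => {(w : World V)})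
    fun w => exists_FMod_eq_singleton (w : World V)
  exact ⟨a, by simpa using ha⟩

end Form

lemma SMod_singleton {V : Type} (a : Form V) : SMod {a} = FMod a := by
  ext w
  simp [SMod, FMod]

lemma SMod_Cn {V : Type} (X : Set (Form V)) : SMod (Cn X) = SMod X :=
  Set.Subset.antisymm (fun _ hw a ha => hw a fun _ hu => hu a ha) fun w hw _ ha => ha w hw

namespace BCO

variable {V E : Type} (O : BCO V E)

lemma mem_Bel_iff (Ψ : E) (a : Form V) : a ∈ O.Bel Ψ ↔ SMod (O.Bel Ψ) ⊆ FMod a := by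
  conv_lhs => rw [← O.closed Ψ]
  rfl

lemma exists_SMod_eq_of_unbiased [Finite V] (hU : Unbiased O) {S : Set (World V)}
    (hS : S.Nonempty) : ∃ Ψ : E, SMod (O.Bel Ψ) = S := by
  obtain ⟨a, ha⟩ := Form.exists_FMod_eq S
  obtain ⟨Ψ, hΨ⟩ := hU {a} (by rwa [SMod_singleton, ha])
  exact ⟨Ψ, by rw [hΨ, SMod_Cn, SMod_singleton, ha]⟩

end BCO

theorem stmt_19_general {V E : Type} [Fintype V] [DecidableEq V]
    (h3 : 3 ≤ Fintype.card (World V)) (O : BCO V E)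
    (hU : Unbiased O)
    (hTriv : ∀ (Ψ : E) (α : Form V),
      ((SMod (O.Bel Ψ) ∩ FMod α.neg).Nonempty →
          SMod (O.Bel (O.op Ψ α)) = SMod (O.Bel Ψ)) ∧
      (SMod (O.Bel Ψ) ∩ FMod α.neg = ∅ →
          SMod (O.Bel (O.op Ψ α)) = SMod (O.Bel Ψ) ∪ FMod α.neg)) :
    ¬ (∀ (Ψ : E) (α β γ : Form V), FMod α.neg ⊆ FMod γ →
        Form.imp α.neg β ∉ O.Bel (O.op Ψ β) →
          γ ∈ O.Bel (O.op Ψ α) → γ ∈ O.Bel (O.op (O.op Ψ α) β)) := by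
  intro hInd
  obtain ⟨w₀, w₁, w₂, h₀₁, h₀₂, h₁₂⟩ := Fintype.two_lt_card_iff.mp h3
  obtain ⟨Ψ, hΨ⟩ := O.exists_SMod_eq_of_unbiased hU (Set.singleton_nonempty w₀)
  obtain ⟨γ, hγ⟩ := Form.exists_FMod_eq {w₀, w₁}
  obtain ⟨β, hβ⟩ := Form.exists_FMod_eq ({w₁, w₂}ᶜ : Set (World V))
  have hαneg : FMod γ.neg.neg = {w₀, w₁} := by simp [hγ]
  have hβneg : FMod β.neg = {w₁, w₂} := by simp [hβ]
  have hβ_disj : {w₀} ∩ FMod β.neg = ∅ := by simp [hβneg, h₀₁, h₀₂]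
  have hΨα : SMod (O.Bel (O.op Ψ γ.neg)) = {w₀} := by
    rw [(hTriv Ψ γ.neg).1 ⟨w₀, by simp [hΨ, hαneg]⟩, hΨ]
  have hΨβ : SMod (O.Bel (O.op Ψ β)) = {w₀, w₁, w₂} := by
    rw [(hTriv Ψ β).2 (hΨ ▸ hβ_disj), hΨ, hβneg]
    rfl
  have hΨαβ : SMod (O.Bel (O.op (O.op Ψ γ.neg) β)) = {w₀, w₁, w₂} := by
    rw [(hTriv _ β).2 (hΨα ▸ hβ_disj), hΨα, hβneg]
    rfl
  have hIC := hInd Ψ γ.neg β γ (hαneg.trans hγ.symm).subset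
    (by simp [O.mem_Bel_iff, hΨβ, hαneg, hβ, Set.insert_subset_iff])
    (by simp [O.mem_Bel_iff, hΨα, hγ])
  simp [O.mem_Bel_iff, hΨαβ, hγ, Set.insert_subset_iff, h₀₂.symm, h₁₂.symm] at hIC

/-- every trivial AGM contraction operator violates (IC_ind),
assuming at least three worlds and unbiasedness. -/
theorem stmt_19 {V E : Type} [Fintype V] [DecidableEq V]
    (h3 : 3 ≤ Fintype.card (World V)) (O : BCO V E)
    (hA : AGMContr O) (hU : Unbiased O)
    (hTriv : ∀ (Ψ : E) (α : Form V),
      ((SMod (O.Bel Ψ) ∩ FMod α.neg).Nonempty →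
          SMod (O.Bel (O.op Ψ α)) = SMod (O.Bel Ψ)) ∧
      (SMod (O.Bel Ψ) ∩ FMod α.neg = ∅ →
          SMod (O.Bel (O.op Ψ α)) = SMod (O.Bel Ψ) ∪ FMod α.neg)) :
    ¬ (∀ (Ψ : E) (α β γ : Form V), FMod α.neg ⊆ FMod γ →
        Form.imp α.neg β ∉ O.Bel (O.op Ψ β) →
          γ ∈ O.Bel (O.op Ψ α) → γ ∈ O.Bel (O.op (O.op Ψ α) β)) :=
  stmt_19_general h3 O hU hTriv
end
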